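/- (Cayley's formula) The number of spanning trees of the complete graph K_n on n labeled vertices is n^(n−2), for n ≥ 1 (with the convention n^(n−2) interpreted as 1 for n = 1 and n = 2). -/

import Mathlib

/-!
Joyal's bijection. The periodic points of a function `f : V → V` are permuted by `f`, and every
other vertex hangs off them in a forest whose parent map is `f`. Listing the periodic points in
increasing order `c₁ < ⋯ < cₖ` and replacing the permutation by the path `f c₁ — ⋯ — f cₖ` turns
`f` into a tree with two marked vertices, the ends of that path; this is reversible, so
`n ^ n = Tₙ · n ^ 2`. A tree with a marked root `r` is in turn the same as a function sending
every vertex one step towards `r`.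
-/

open Function Set

namespace Cayley

variable {α : Type*}

lemma exists_iterate_mem_of_eqOn_compl {f g : α → α} {s : Set α} (hfg : EqOn f g sᶜ) {x : α}
    {k : ℕ} (hk : f^[k] x ∈ s) : ∃ j, g^[j] x ∈ s := by
  induction k generalizing x with
  | zero => exact ⟨0, hk⟩
  | succ k ih =>
    by_cases hx : x ∈ s
    · exact ⟨0, hx⟩
    · obtain ⟨j, hj⟩ := ih (x := f x) hk
      exact ⟨j + 1, by rwa [iterate_succ_apply, ← hfg hx]⟩

lemma mem_of_mem_periodicPts_of_iterate_mem {f : α → α} {s : Set α} (hs : MapsTo f s s)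
    {x : α} (hx : x ∈ periodicPts f) {k : ℕ} (hk : f^[k] x ∈ s) : x ∈ s := by
  obtain ⟨n, hn, hper⟩ := mem_periodicPts.mp hx
  have hkn : k ≤ n * k := Nat.le_mul_of_pos_left k hn
  rw [← (hper.mul_const k).eq, ← Nat.sub_add_cancel hkn, iterate_add_apply]
  exact hs.iterate _ hk

lemma subset_periodicPts_of_injOn {f : α → α} {s : Set α} (hs : s.Finite)
    (hmaps : MapsTo f s s) (hinj : InjOn f s) : s ⊆ periodicPts f := by
  have := hs.to_subtype
  intro x hx
  have hrestrict : (⟨x, hx⟩ : s) ∈ periodicPts (hmaps.restrict f s s) :=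
    ((hmaps.restrict_inj).mpr hinj).mem_periodicPts _
  exact Semiconj.mapsTo_periodicPts (g := Subtype.val) (fb := f) (fun _ => rfl) hrestrict

lemma exists_iterate_mem_periodicPts [Finite α] (f : α → α) (x : α) :
    ∃ k, f^[k] x ∈ periodicPts f := by
  obtain ⟨i, j, hij, h⟩ := Finite.exists_ne_map_eq_of_infinite (f^[·] x)
  wlog hlt : i < j generalizing i j
  · exact this j i hij.symm h.symm (by omega)
  refine ⟨i, mk_mem_periodicPts (n := j - i) (by omega) ?_⟩
  rw [IsPeriodicPt, IsFixedPt, ← iterate_add_apply, Nat.sub_add_cancel hlt.le, h]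

structure IsRootedAt (p : α → α) (r : α) : Prop where
  map_root : p r = r
  exists_iterate_eq (x : α) : ∃ k, p^[k] x = r

namespace IsRootedAt

variable {p : α → α} {r x : α}

lemma root_mem_periodicPts (hp : IsRootedAt p r) : r ∈ periodicPts p :=
  mk_mem_periodicPts one_pos hp.map_root

lemma eq_root_of_mem_periodicPts (hp : IsRootedAt p r) (hx : x ∈ periodicPts p) : x = r := by
  obtain ⟨k, hk⟩ := hp.exists_iterate_eq x
  refine ((bijOn_periodicPts p).injOn.iterate (bijOn_periodicPts p).mapsTo k) hx
    hp.root_mem_periodicPts ?_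
  rw [hk, iterate_fixed hp.map_root]

lemma apply_ne_self (hp : IsRootedAt p r) (hx : x ≠ r) : p x ≠ x :=
  fun h => hx (hp.eq_root_of_mem_periodicPts (mk_mem_periodicPts one_pos h))

end IsRootedAt

section Lists

variable {L : List α}

lemma iterate_getElem_of_apply_getElem {p : α → α}
    (hL : ∀ i (h : i + 1 < L.length), p L[i] = L[i + 1]) {i k : ℕ} (h : i + k < L.length) :
    p^[k] L[i] = L[i + k] := by
  induction k generalizing i with
  | zero => rfl
  | succ k ih =>
    rw [iterate_succ_apply, hL i (by omega), ih (by omega)]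
    simp only [Nat.add_right_comm i 1 k, Nat.add_assoc]

section SuccAlong

variable [DecidableEq α]

def succAlong (L : List α) (x : α) : α := L.getD (L.idxOf x + 1) x

lemma succAlong_getElem (hL : L.Nodup) {i : ℕ} (h : i + 1 < L.length) :
    succAlong L L[i] = L[i + 1] := by
  rw [succAlong, hL.idxOf_getElem, List.getD_eq_getElem]

lemma succAlong_getLast (hL : L.Nodup) (hne : L ≠ []) :
    succAlong L (L.getLast hne) = L.getLast hne := by
  rw [List.getLast_eq_getElem, succAlong, hL.idxOf_getElem, List.getD_eq_default]
  omega

end SuccAlong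

section PermOfList

variable [LinearOrder α]

/-- Sends the `i`-th smallest entry of `L` to `L[i]`. -/
def permOfList (L : List α) (x : α) : α := L.getD ((L.toFinset.sort (· ≤ ·)).idxOf x) x

lemma length_sort_toFinset (hL : L.Nodup) : (L.toFinset.sort (· ≤ ·)).length = L.length := by
  rw [Finset.length_sort, List.toFinset_card_of_nodup hL]

lemma permOfList_getElem_sort {s : List α} (hs : L.toFinset.sort (· ≤ ·) = s)
    {i : ℕ} (hi : i < s.length) (hi' : i < L.length) : permOfList L s[i] = L[i] := by
  subst hs
  rw [permOfList, (Finset.sort_nodup _ _).idxOf_getElem, List.getD_eq_getElem]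

lemma map_permOfList (hL : L.Nodup) : (L.toFinset.sort (· ≤ ·)).map (permOfList L) = L :=
  List.ext_getElem (by rw [List.length_map, length_sort_toFinset hL]) fun i _ _ => by
    rw [List.getElem_map, permOfList_getElem_sort rfl]

lemma mapsTo_permOfList : MapsTo (permOfList L) {x | x ∈ L} {x | x ∈ L} := by
  intro x (hx : x ∈ L)
  show permOfList L x ∈ L
  rw [permOfList]
  rcases lt_or_ge ((L.toFinset.sort (· ≤ ·)).idxOf x) L.length with h | h
  · rw [List.getD_eq_getElem _ _ h]
    exact List.getElem_mem h
  · rwa [List.getD_eq_default _ _ h]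

lemma injOn_permOfList (hL : L.Nodup) : InjOn (permOfList L) {x | x ∈ L} := by
  intro x (hx : x ∈ L) y (hy : y ∈ L) hxy
  rw [← List.mem_toFinset, ← Finset.mem_sort (· ≤ ·)] at hx hy
  obtain ⟨i, hi, rfl⟩ := List.getElem_of_mem hx
  obtain ⟨j, hj, rfl⟩ := List.getElem_of_mem hy
  rw [permOfList_getElem_sort rfl _ (by rwa [← length_sort_toFinset hL]),
    permOfList_getElem_sort rfl _ (by rwa [← length_sort_toFinset hL]),
    hL.getElem_inj_iff] at hxy
  simp only [hxy]

end PermOfList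

end Lists

section PathToRoot

variable (p : α → α) (r a : α)

noncomputable def depth : ℕ := sInf {k | p^[k] a = r}

noncomputable def pathToRoot : List α := List.iterate p a (depth p r a + 1)

variable {p r a}

lemma pathToRoot_ne_nil : pathToRoot p r a ≠ [] :=
  List.ne_nil_of_length_pos (by simp [pathToRoot])

lemma iterate_depth (h : ∃ k, p^[k] a = r) : p^[depth p r a] a = r :=
  Nat.sInf_mem h

lemma head_pathToRoot : (pathToRoot p r a).head pathToRoot_ne_nil = a := by
  simp [pathToRoot, List.head_eq_getElem]

lemma getLast_pathToRoot (h : ∃ k, p^[k] a = r) :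
    (pathToRoot p r a).getLast pathToRoot_ne_nil = r := by
  rw [List.getLast_eq_getElem]
  simp only [pathToRoot, List.getElem_iterate, List.length_iterate, Nat.add_sub_cancel,
    iterate_depth h]

lemma root_mem_pathToRoot (h : ∃ k, p^[k] a = r) : r ∈ pathToRoot p r a := by
  have := List.getLast_mem (pathToRoot_ne_nil (p := p) (r := r) (a := a))
  rwa [getLast_pathToRoot h] at this

lemma IsRootedAt.nodup_pathToRoot (hp : IsRootedAt p r) : (pathToRoot p r a).Nodup := by
  refine List.nodup_iff_injective_get.mpr fun ⟨i, hi⟩ ⟨j, hj⟩ hij => ?_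
  simp only [pathToRoot, List.get_eq_getElem, List.getElem_iterate, List.length_iterate]
    at hij hi hj
  -- A repetition along the orbit makes its first occurrence periodic, hence the root.
  suffices ∀ i j, i < j → j ≤ depth p r a → p^[i] a ≠ p^[j] a by
    rcases lt_trichotomy i j with h | h | h
    exacts [absurd hij (this i j h (by omega)), Fin.ext h, absurd hij.symm (this j i h (by omega))]
  intro i j hlt hj hij
  have hper : p^[i] a ∈ periodicPts p := mk_mem_periodicPts (n := j - i) (by omega) <| by
    rw [IsPeriodicPt, IsFixedPt, ← iterate_add_apply, Nat.sub_add_cancel hlt.le, hij]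
  exact Nat.notMem_of_lt_sInf (by omega : i < depth p r a) (hp.eq_root_of_mem_periodicPts hper)

lemma pathToRoot_eq_of_apply_getElem {L : List α} (hL : L.Nodup) (hne : L ≠ [])
    (hchain : ∀ i (h : i + 1 < L.length), p L[i] = L[i + 1]) :
    pathToRoot p (L.getLast hne) (L.head hne) = L := by
  have hiter : ∀ i (h : i < L.length), p^[i] (L.head hne) = L[i] := fun i h => by
    rw [List.head_eq_getElem, iterate_getElem_of_apply_getElem hchain (by omega)]
    simp
  have hpos := List.length_pos_iff.mpr hne
  have hlast : p^[L.length - 1] (L.head hne) = L.getLast hne := by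
    rw [hiter _ (by omega), List.getLast_eq_getElem]
  have hle : depth p (L.getLast hne) (L.head hne) ≤ L.length - 1 := Nat.sInf_le hlast
  have hdepth : depth p (L.getLast hne) (L.head hne) = L.length - 1 := by
    have := (iterate_depth ⟨_, hlast⟩).trans hlast.symm
    rwa [hiter _ (by omega), hiter _ (by omega), hL.getElem_inj_iff] at this
  refine List.ext_getElem (by simp only [pathToRoot, List.length_iterate]; omega) fun i _ hi => ?_
  simp only [pathToRoot, List.getElem_iterate, hiter i hi]

lemma IsRootedAt.succAlong_pathToRoot [DecidableEq α] (hp : IsRootedAt p r) {x : α}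
    (hx : x ∈ pathToRoot p r a) : succAlong (pathToRoot p r a) x = p x := by
  obtain ⟨i, hi, rfl⟩ := List.getElem_of_mem hx
  have hL := hp.nodup_pathToRoot (a := a)
  rcases lt_or_ge (i + 1) (pathToRoot p r a).length with h | h
  · rw [succAlong_getElem hL h]
    simp only [pathToRoot, List.getElem_iterate, iterate_succ_apply']
  · have hlast : (pathToRoot p r a)[i] = (pathToRoot p r a).getLast pathToRoot_ne_nil := by
      rw [List.getLast_eq_getElem]
      congr
      omega
    rw [hlast, succAlong_getLast hL, getLast_pathToRoot (hp.exists_iterate_eq a), hp.map_root]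

end PathToRoot

section Joyal

variable [Finite α] [LinearOrder α] (f : α → α)

noncomputable def spine : List α :=
  ((Set.toFinite (periodicPts f)).toFinset.sort (· ≤ ·)).map f

variable {f}

lemma mem_spine {x : α} : x ∈ spine f ↔ x ∈ periodicPts f := by
  rw [← (bijOn_periodicPts f).image_eq]
  simp [spine]

lemma nodup_spine : (spine f).Nodup :=
  (Finset.sort_nodup _ _).map_on fun _ hx _ hy =>
    (bijOn_periodicPts f).injOn (by simpa using hx) (by simpa using hy)

lemma toFinset_spine : (spine f).toFinset = (Set.toFinite (periodicPts f)).toFinset := by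
  ext x
  simp [mem_spine]

lemma spine_ne_nil [Nonempty α] : spine f ≠ [] := by
  obtain ⟨k, hk⟩ := exists_iterate_mem_periodicPts f (Classical.arbitrary α)
  exact List.ne_nil_of_mem (mem_spine.mpr hk)

lemma permOfList_spine {x : α} (hx : x ∈ periodicPts f) : permOfList (spine f) x = f x := by
  have hmem : x ∈ (Set.toFinite (periodicPts f)).toFinset.sort (· ≤ ·) := by simpa
  obtain ⟨i, hi, rfl⟩ := List.getElem_of_mem hmem
  rw [permOfList_getElem_sort (by rw [toFinset_spine]) hi (by simpa [spine] using hi)]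
  simp only [spine, List.getElem_map]

variable (f)

open scoped Classical in
noncomputable def joyalFun : α → α := (periodicPts f).piecewise (succAlong (spine f)) f

variable {f}

lemma joyalFun_of_mem {x : α} (hx : x ∈ periodicPts f) : joyalFun f x = succAlong (spine f) x :=
  if_pos hx

lemma joyalFun_of_notMem {x : α} (hx : x ∉ periodicPts f) : joyalFun f x = f x :=
  if_neg hx

lemma joyalFun_getElem_spine {i : ℕ} (h : i + 1 < (spine f).length) :
    joyalFun f (spine f)[i] = (spine f)[i + 1] := by
  rw [joyalFun_of_mem (mem_spine.mp (List.getElem_mem _)), succAlong_getElem nodup_spine h]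

variable [Nonempty α] (f)

noncomputable def joyalRoot : α := (spine f).getLast spine_ne_nil

noncomputable def joyalMark : α := (spine f).head spine_ne_nil

lemma isRootedAt_joyalFun : IsRootedAt (joyalFun f) (joyalRoot f) := by
  have hroot : joyalRoot f ∈ periodicPts f := mem_spine.mp (List.getLast_mem _)
  have reach_of_mem : ∀ x ∈ periodicPts f, ∃ k, (joyalFun f)^[k] x = joyalRoot f := by
    intro x hx
    obtain ⟨i, hi, rfl⟩ := List.getElem_of_mem (mem_spine.mpr hx)
    refine ⟨(spine f).length - 1 - i, ?_⟩
    rw [iterate_getElem_of_apply_getElem (fun j hj => joyalFun_getElem_spine hj) (by omega),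
      joyalRoot, List.getLast_eq_getElem]
    congr 1
    omega
  refine ⟨by rw [joyalFun_of_mem hroot, joyalRoot, succAlong_getLast nodup_spine], fun x => ?_⟩
  obtain ⟨k, hk⟩ := exists_iterate_mem_periodicPts f x
  obtain ⟨j, hj⟩ :=
    exists_iterate_mem_of_eqOn_compl (fun y hy => (joyalFun_of_notMem hy).symm) hk
  obtain ⟨i, hi⟩ := reach_of_mem _ hj
  exact ⟨i + j, by rw [iterate_add_apply, hi]⟩

variable {f}

lemma pathToRoot_joyalFun : pathToRoot (joyalFun f) (joyalRoot f) (joyalMark f) = spine f :=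
  pathToRoot_eq_of_apply_getElem nodup_spine spine_ne_nil fun _ => joyalFun_getElem_spine

end Joyal

section JoyalInv

variable [LinearOrder α] (p : α → α) (r a : α)

open scoped Classical in
noncomputable def joyalInv : α → α :=
  {x | x ∈ pathToRoot p r a}.piecewise (permOfList (pathToRoot p r a)) p

variable {p r a}

lemma joyalInv_of_mem {x : α} (hx : x ∈ pathToRoot p r a) :
    joyalInv p r a x = permOfList (pathToRoot p r a) x :=
  if_pos hx

lemma joyalInv_of_notMem {x : α} (hx : x ∉ pathToRoot p r a) : joyalInv p r a x = p x :=
  if_neg hx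

lemma joyalInv_joyalFun [Finite α] [Nonempty α] (f : α → α) :
    joyalInv (joyalFun f) (joyalRoot f) (joyalMark f) = f := by
  funext x
  by_cases hx : x ∈ periodicPts f
  · rw [joyalInv_of_mem (by rwa [pathToRoot_joyalFun, mem_spine]), pathToRoot_joyalFun,
      permOfList_spine hx]
  · rw [joyalInv_of_notMem (by rwa [pathToRoot_joyalFun, mem_spine]), joyalFun_of_notMem hx]

variable [Finite α]

lemma IsRootedAt.periodicPts_joyalInv (hp : IsRootedAt p r) :
    periodicPts (joyalInv p r a) = {x | x ∈ pathToRoot p r a} := by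
  have hmaps : MapsTo (joyalInv p r a) {x | x ∈ pathToRoot p r a} {x | x ∈ pathToRoot p r a} :=
    fun x hx => by rw [joyalInv_of_mem hx]; exact mapsTo_permOfList hx
  refine subset_antisymm (fun x hx => ?_) (subset_periodicPts_of_injOn (Set.toFinite _) hmaps ?_)
  · -- the orbit of `x` reaches `r` under `p`, hence enters the path under `joyalInv p r a`
    obtain ⟨k, hk⟩ := hp.exists_iterate_eq x
    have hr : p^[k] x ∈ {x | x ∈ pathToRoot p r a} := by
      rw [hk]
      exact root_mem_pathToRoot (hp.exists_iterate_eq a)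
    obtain ⟨j, hj⟩ :=
      exists_iterate_mem_of_eqOn_compl (fun y hy => (joyalInv_of_notMem hy).symm) hr
    exact mem_of_mem_periodicPts_of_iterate_mem hmaps hx hj
  · exact (injOn_permOfList hp.nodup_pathToRoot).congr fun x hx => (joyalInv_of_mem hx).symm

lemma IsRootedAt.spine_joyalInv (hp : IsRootedAt p r) :
    spine (joyalInv p r a) = pathToRoot p r a := by
  have hfin : (Set.toFinite (periodicPts (joyalInv p r a))).toFinset =
      (pathToRoot p r a).toFinset := by
    ext x
    rw [Set.Finite.mem_toFinset, hp.periodicPts_joyalInv, List.mem_toFinset]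
    rfl
  rw [spine, hfin, List.map_congr_left fun x hx => joyalInv_of_mem (by simpa using hx),
    map_permOfList hp.nodup_pathToRoot]

lemma IsRootedAt.joyalFun_joyalInv (hp : IsRootedAt p r) : joyalFun (joyalInv p r a) = p := by
  funext x
  by_cases hx : x ∈ pathToRoot p r a
  · rw [joyalFun_of_mem (by rwa [hp.periodicPts_joyalInv]), hp.spine_joyalInv,
      hp.succAlong_pathToRoot hx]
  · rw [joyalFun_of_notMem (by rwa [hp.periodicPts_joyalInv]), joyalInv_of_notMem hx]

variable [Nonempty α]

lemma IsRootedAt.joyalRoot_joyalInv (hp : IsRootedAt p r) : joyalRoot (joyalInv p r a) = r :=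
  (List.getLast_congr _ _ hp.spine_joyalInv).trans (getLast_pathToRoot (hp.exists_iterate_eq a))

lemma IsRootedAt.joyalMark_joyalInv (hp : IsRootedAt p r) : joyalMark (joyalInv p r a) = a := by
  have key : ∀ L (h : L ≠ []), L = pathToRoot p r a → L.head h = a := by
    rintro _ _ rfl
    exact head_pathToRoot
  exact key _ _ hp.spine_joyalInv

end JoyalInv

section JoyalEquiv

variable [Finite α] [LinearOrder α] [Nonempty α]

noncomputable def joyalEquiv :
    (α → α) ≃ {q : (α → α) × α // IsRootedAt q.1 q.2} × α where
  toFun f := (⟨(joyalFun f, joyalRoot f), isRootedAt_joyalFun f⟩, joyalMark f)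
  invFun q := joyalInv q.1.1.1 q.1.1.2 q.2
  left_inv := joyalInv_joyalFun
  right_inv := fun ⟨⟨⟨p, r⟩, hp⟩, a⟩ => by
    simp only [hp.joyalFun_joyalInv, hp.joyalRoot_joyalInv, hp.joyalMark_joyalInv]

end JoyalEquiv

section Trees

open SimpleGraph

lemma _root_.SimpleGraph.Reachable.exists_adj_dist_lt {G : SimpleGraph α} {v r : α}
    (h : G.Reachable v r) (hv : v ≠ r) : ∃ w, G.Adj v w ∧ G.dist w r < G.dist v r := by
  obtain ⟨w, hw⟩ := h.exists_walk_length_eq_dist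
  cases w with
  | nil => exact absurd rfl hv
  | cons hadj q =>
    rw [Walk.length_cons] at hw
    exact ⟨_, hadj, (dist_le q).trans_lt (by omega)⟩

def parentGraph (p : α → α) : SimpleGraph α := fromRel fun x y => p x = y

variable {p : α → α} {r : α}

namespace IsRootedAt

lemma parentGraph_adj (hp : IsRootedAt p r) {x : α} (hx : x ≠ r) :
    (parentGraph p).Adj x (p x) :=
  (fromRel_adj _ _ _).mpr ⟨(hp.apply_ne_self hx).symm, Or.inl rfl⟩

lemma reachable_root (hp : IsRootedAt p r) (x : α) : (parentGraph p).Reachable x r := by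
  obtain ⟨k, hk⟩ := hp.exists_iterate_eq x
  induction k generalizing x with
  | zero => exact hk ▸ Reachable.refl x
  | succ k ih =>
    by_cases hx : x = r
    · exact hx ▸ Reachable.refl x
    · exact (hp.parentGraph_adj hx).reachable.trans (ih (p x) hk)

lemma connected_parentGraph [Nonempty α] (hp : IsRootedAt p r) : (parentGraph p).Connected :=
  (connected_iff_exists_forall_reachable _).mpr ⟨r, fun x => (hp.reachable_root x).symm⟩

lemma edgeSet_parentGraph (hp : IsRootedAt p r) :
    (parentGraph p).edgeSet = (fun x => s(x, p x)) '' {r}ᶜ := by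
  ext e
  induction e using Sym2.ind with
  | _ x y =>
    simp only [mem_edgeSet, fromRel_adj, parentGraph, Set.mem_image, Set.mem_compl_singleton_iff]
    constructor
    · rintro ⟨hne, rfl | rfl⟩
      · exact ⟨x, fun h => hne (h ▸ hp.map_root.symm), rfl⟩
      · exact ⟨y, fun h => hne (h ▸ hp.map_root), Sym2.eq_swap⟩
    · rintro ⟨z, hz, hze⟩
      rcases Sym2.eq_iff.mp hze with ⟨rfl, rfl⟩ | ⟨rfl, rfl⟩
      · exact ⟨(hp.apply_ne_self hz).symm, Or.inl rfl⟩
      · exact ⟨hp.apply_ne_self hz, Or.inr rfl⟩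

lemma injOn_mk_apply (hp : IsRootedAt p r) : InjOn (fun x => s(x, p x)) {r}ᶜ := by
  intro x hx y _ hxy
  rcases Sym2.eq_iff.mp hxy with ⟨h, _⟩ | ⟨hxy, hyx⟩
  · exact h
  -- otherwise `x` would be a point of period 2
  · have hper : x ∈ periodicPts p := mk_mem_periodicPts two_pos (by
      show p (p x) = x
      rw [hyx, hxy])
    exact absurd (hp.eq_root_of_mem_periodicPts hper) hx

lemma isTree_parentGraph [Finite α] [Nonempty α] (hp : IsRootedAt p r) :
    (parentGraph p).IsTree := by
  refine isTree_iff_connected_and_card.mpr ⟨hp.connected_parentGraph, ?_⟩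
  rw [Nat.card_coe_set_eq, hp.edgeSet_parentGraph, hp.injOn_mk_apply.ncard_image,
    Set.ncard_compl, Set.ncard_singleton]
  have := Nat.card_pos (α := α)
  omega

lemma eq_of_parentGraph_eq {q : α → α} (hp : IsRootedAt p r) (hq : IsRootedAt q r)
    (h : parentGraph p = parentGraph q) : p = q := by
  funext x
  by_contra hne
  -- Where `p` and `q` disagree, the `q`-edge must be a `p`-edge pointing back, and the
  -- disagreement propagates along the `q`-orbit, which would drag `x` to the root.
  have step : ∀ y, p y ≠ q y → p (q y) = y ∧ p (q y) ≠ q (q y) := by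
    intro y hy
    have hyr : y ≠ r := fun h => hy (by rw [h, hp.map_root, hq.map_root])
    have hadj : (parentGraph p).Adj y (q y) := h ▸ hq.parentGraph_adj hyr
    have hback : p (q y) = y :=
      (((fromRel_adj _ _ _).mp hadj).2).resolve_left hy
    refine ⟨hback, fun h2 => hyr (hq.eq_root_of_mem_periodicPts ?_)⟩
    refine mk_mem_periodicPts two_pos (show q (q y) = y from ?_)
    rw [← h2, hback]
  have key : ∀ k, p^[k] (q^[k] x) = x ∧ p (q^[k] x) ≠ q (q^[k] x) := by
    intro k
    induction k with
    | zero => exact ⟨rfl, hne⟩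
    | succ k ih =>
      obtain ⟨hback, hne'⟩ := step _ ih.2
      rw [iterate_succ_apply' q]
      exact ⟨by rw [iterate_succ_apply, hback, ih.1], hne'⟩
  obtain ⟨k, hk⟩ := hq.exists_iterate_eq x
  have hx : x = r := by rw [← (key k).1, hk, iterate_fixed hp.map_root]
  exact hne (by rw [hx, hp.map_root, hq.map_root])

end IsRootedAt

lemma _root_.SimpleGraph.IsTree.exists_isRootedAt_parentGraph_eq {G : SimpleGraph α}
    (hG : G.IsTree) (r : α) : ∃ p, IsRootedAt p r ∧ parentGraph p = G := by
  -- Send every vertex other than `r` to a neighbour closer to `r`.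
  have hchoice : ∀ v, ∃ w,
      (v = r ∧ w = r) ∨ (v ≠ r ∧ G.Adj v w ∧ G.dist w r < G.dist v r) :=
    fun v => by
      by_cases hv : v = r
      · exact ⟨r, Or.inl ⟨hv, rfl⟩⟩
      · exact (hG.connected.preconnected v r).exists_adj_dist_lt hv |>.imp
          fun _ hw => Or.inr ⟨hv, hw⟩
  choose p hp using hchoice
  have hpr : p r = r := by rcases hp r with h | h; exacts [h.2, absurd rfl h.1]
  have hparent : ∀ v, v ≠ r → G.Adj v (p v) ∧ G.dist (p v) r < G.dist v r := fun v hv =>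
    (hp v).resolve_left (fun h => hv h.1) |>.2
  have hrooted : IsRootedAt p r := by
    refine ⟨hpr, fun v => ?_⟩
    induction hd : G.dist v r using Nat.strong_induction_on generalizing v with
    | _ d ih =>
      by_cases hv : v = r
      · exact ⟨0, hv⟩
      · obtain ⟨k, hk⟩ := ih _ (hd ▸ (hparent v hv).2) (p v) rfl
        exact ⟨k + 1, hk⟩
  have hle : parentGraph p ≤ G := by
    intro x y hxy
    obtain ⟨hne, rfl | rfl⟩ := (fromRel_adj _ _ _).mp hxy
    · exact (hparent x fun h => hne (by rw [h, hpr])).1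
    · exact (hparent y fun h => hne (by rw [h, hpr])).1.symm
  have : Nonempty α := ⟨r⟩
  exact ⟨p, hrooted,
    hle.antisymm ((isTree_iff_minimal_connected.mp hG).2 hrooted.connected_parentGraph hle)⟩

variable [Finite α] [Nonempty α]

noncomputable def rootedTreeEquiv :
    {q : (α → α) × α // IsRootedAt q.1 q.2} ≃ {G : SimpleGraph α // G.IsTree} × α :=
  Equiv.ofBijective (fun q => (⟨parentGraph q.1.1, q.2.isTree_parentGraph⟩, q.1.2)) <| by
    constructor
    · rintro ⟨⟨p, r⟩, hp⟩ ⟨⟨q, s⟩, hq⟩ h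
      simp only [Prod.mk.injEq, Subtype.mk.injEq] at h
      obtain ⟨hG, rfl⟩ := h
      exact Subtype.ext (Prod.ext (hp.eq_of_parentGraph_eq hq hG) rfl)
    · rintro ⟨⟨G, hG⟩, r⟩
      obtain ⟨p, hp, rfl⟩ := hG.exists_isRootedAt_parentGraph_eq r
      exact ⟨⟨(p, r), hp⟩, rfl⟩

end Trees

theorem card_isTree_mul_card_sq (α : Type*) [Finite α] [Nonempty α] :
    Nat.card {G : SimpleGraph α // G.IsTree} * Nat.card α ^ 2 = Nat.card α ^ Nat.card α := by
  have := Fintype.ofFinite α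
  -- any order will do: it only serves to match permutations with paths
  let _ : LinearOrder α := LinearOrder.lift' _ (Fintype.equivFin α).injective
  calc Nat.card {G : SimpleGraph α // G.IsTree} * Nat.card α ^ 2
      = Nat.card (({G : SimpleGraph α // G.IsTree} × α) × α) := by
        rw [Nat.card_prod, Nat.card_prod]; ring
    _ = Nat.card (α → α) :=
        Nat.card_congr ((rootedTreeEquiv.prodCongr (Equiv.refl α)).symm.trans joyalEquiv.symm)
    _ = Nat.card α ^ Nat.card α := Nat.card_fun

end Cayley

/-- Cayley's formula: the number of labeled trees on `n ≥ 1` vertices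
is `n^(n−2)` (with natural subtraction, so the count is `1` for `n = 1, 2`). -/
theorem cayley_formula (n : ℕ) (hn : 1 ≤ n) :
    ({G : SimpleGraph (Fin n) | G.IsTree} : Set (SimpleGraph (Fin n))).ncard
      = n ^ (n - 2) := by
  have : Nonempty (Fin n) := Fin.pos_iff_nonempty.mp hn
  have hcount := Cayley.card_isTree_mul_card_sq (Fin n)
  rw [Nat.card_fin] at hcount
  have hpow : n ^ (n - 2) * n ^ 2 = n ^ n := by
    rcases Nat.lt_or_ge n 2 with h | h
    · interval_cases n; rfl
    · rw [← pow_add, Nat.sub_add_cancel h]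
  rw [← Nat.card_coe_set_eq]
  exact Nat.eq_of_mul_eq_mul_right (by positivity) (hcount.trans hpow.symm)
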